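/- (Proposition on pair cross-attention: total invariance of α_s^pair and X-equivariance / Y-invariance of α_v^pair.) Let N, C, D ≥ 1. Let p : Fin N → Fin N → ℝ be any array of scalars (the invariant scalar-feature score term), let F_X, F_Y : Fin N → Fin C → ℝ³ be per-point vector features with F_X i c ≠ 0 and F_Y j c ≠ 0 for all i, j, c, let g : Fin N → (Fin D → ℝ) be invariant value features, let ψ : (Fin C → ℝ) → (Fin C → ℝ) be any function, let w_q, w_k ∈ ℝ^C and let W be a real C×C matrix. For each i, j define the aligned features A i j c = (ψ(fun c' ↦ ‖F_X i c' ⊗ F_Y j c'‖_F) c • ((F_X i c ⊗ F_Y j c) / ‖F_X i c ⊗ F_Y j c‖_F)) *ᵥ (F_Y j c), the scores e i j = p i j + Σ_{c,c'} (w_q c) * ⟨F_X i c, A i j c'⟩ * (w_k c'), the softmax weights s i j = exp(e i j) / Σ_{j'} exp(e i j'), and the outputs α_s i = Σ_j (s i j) • (g j) and α_v i c = Σ_j (s i j) • ((A i j) as a 3×C matrix * W evaluated at channel c). Then for all R_x, R_y ∈ SO(3), replacing F_X by fun i c ↦ R_x *ᵥ F_X i c and F_Y by fun j c ↦ R_y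 *ᵥ F_Y j c leaves e, s and α_s unchanged, and transforms α_v i c into R_x *ᵥ (α_v i c) for all i, c. -/

import Mathlib

/-- The Frobenius norm of a 3×3 real matrix: `‖F‖_F = √(Σᵢⱼ Fᵢⱼ²)`. -/
noncomputable def frobNorm (F : Matrix (Fin 3) (Fin 3) ℝ) : ℝ :=
  Real.sqrt (∑ i, ∑ j, (F i j) ^ 2)

/-!
Rotating `F_X` by `R_x` and `F_Y` by `R_y` turns the outer product `F_X ⊗ F_Y` into
`R_x (F_X ⊗ F_Y) R_yᵀ`, whose Frobenius norm is unchanged; applied to `R_y F_Y`, the factor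
`R_yᵀ R_y = 1` cancels, so every aligned feature is simply rotated by `R_x`. The scores pair
these with the likewise rotated `F_X`, hence are invariant, and so are the softmax weights and
`α_s`; `α_v` is a linear combination of rotated aligned features, hence rotates with `R_x`.
-/

open Matrix

theorem dotProduct_mulVec_mulVec_of_transpose_mul_self {n α : Type*} [Fintype n] [DecidableEq n]
    [CommSemiring α] {R : Matrix n n α} (hR : Rᵀ * R = 1)
    (u v : n → α) : R *ᵥ u ⬝ᵥ R *ᵥ v = u ⬝ᵥ v := by
  rw [dotProduct_mulVec, ← mulVec_transpose, mulVec_mulVec, hR, one_mulVec]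

theorem vecMulVec_mulVec_eq_smul {n α : Type*} [Fintype n] [CommSemiring α] (u v w : n → α) :
    vecMulVec u v *ᵥ w = (v ⬝ᵥ w) • u := by
  rw [vecMulVec_mulVec, op_smul_eq_smul]

theorem frobNorm_vecMulVec (u v : Fin 3 → ℝ) :
    frobNorm (vecMulVec u v) = Real.sqrt ((u ⬝ᵥ u) * (v ⬝ᵥ v)) := by
  unfold frobNorm
  congr 1
  simp only [vecMulVec_apply, dotProduct, mul_pow, ← sq, Finset.sum_mul, Finset.mul_sum]
  exact Finset.sum_comm

section Rotation

variable {Rx Ry : Matrix (Fin 3) (Fin 3) ℝ}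

theorem frobNorm_vecMulVec_mulVec (hRx : Rxᵀ * Rx = 1) (hRy : Ryᵀ * Ry = 1) (u v : Fin 3 → ℝ) :
    frobNorm (vecMulVec (Rx *ᵥ u) (Ry *ᵥ v)) = frobNorm (vecMulVec u v) := by
  rw [frobNorm_vecMulVec, frobNorm_vecMulVec,
    dotProduct_mulVec_mulVec_of_transpose_mul_self hRx,
    dotProduct_mulVec_mulVec_of_transpose_mul_self hRy]

noncomputable def alignedFeature {C : ℕ} (ψ : (Fin C → ℝ) → (Fin C → ℝ))
    (x y : Fin C → Fin 3 → ℝ) (c : Fin C) : Fin 3 → ℝ :=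
  (ψ (fun c' => frobNorm (vecMulVec (x c') (y c'))) c
      • ((frobNorm (vecMulVec (x c) (y c)))⁻¹ • vecMulVec (x c) (y c))) *ᵥ y c

theorem alignedFeature_mulVec {C : ℕ} (hRx : Rxᵀ * Rx = 1) (hRy : Ryᵀ * Ry = 1)
    (ψ : (Fin C → ℝ) → (Fin C → ℝ)) (x y : Fin C → Fin 3 → ℝ) (c : Fin C) :
    alignedFeature ψ (fun c => Rx *ᵥ x c) (fun c => Ry *ᵥ y c) c
      = Rx *ᵥ alignedFeature ψ x y c := by
  simp only [alignedFeature, frobNorm_vecMulVec_mulVec hRx hRy, smul_mulVec,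
    vecMulVec_mulVec_eq_smul, dotProduct_mulVec_mulVec_of_transpose_mul_self hRy, mulVec_smul]

end Rotation

theorem of_mulVec_columns {m n k α : Type*} [Fintype n] [NonUnitalNonAssocSemiring α]
    (R : Matrix m n α) (a : k → n → α) :
    of (fun r c => (R *ᵥ a c) r) = R * of (fun r c => a c r) :=
  rfl

theorem mul_col_eq_mulVec {m n k α : Type*} [Fintype n] [NonUnitalNonAssocSemiring α]
    (R : Matrix m n α) (B : Matrix n k α) (c : k) :
    (fun r => (R * B) r c) = R *ᵥ fun r => B r c :=
  rfl

theorem pair_cross_attention_equivariance_general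
    (N C D : ℕ)
    (p : Fin N → Fin N → ℝ)
    (FX FY : Fin N → Fin C → Fin 3 → ℝ)
    (g : Fin N → Fin D → ℝ)
    (ψ : (Fin C → ℝ) → (Fin C → ℝ))
    (wq wk : Fin C → ℝ)
    (W : Matrix (Fin C) (Fin C) ℝ)
    (Rx Ry : Matrix (Fin 3) (Fin 3) ℝ)
    (hRx : Rx.transpose * Rx = 1)
    (hRy : Ry.transpose * Ry = 1) :
    -- aligned features `A i j c = b(F_X i, F_Y j) c *ᵥ F_Y j c`
    let A : (Fin N → Fin C → Fin 3 → ℝ) → (Fin N → Fin C → Fin 3 → ℝ) →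
        Fin N → Fin N → Fin C → Fin 3 → ℝ :=
      fun GX GY i j c =>
        (ψ (fun c' => frobNorm (Matrix.vecMulVec (GX i c') (GY j c'))) c
            • ((frobNorm (Matrix.vecMulVec (GX i c) (GY j c)))⁻¹
              • Matrix.vecMulVec (GX i c) (GY j c))).mulVec (GY j c)
    -- attention scores
    let e : (Fin N → Fin C → Fin 3 → ℝ) → (Fin N → Fin C → Fin 3 → ℝ) →
        Fin N → Fin N → ℝ :=
      fun GX GY i j =>
        p i j + ∑ c, ∑ c', wq c * (dotProduct (GX i c) (A GX GY i j c')) * wk c'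
    -- softmax weights
    let s : (Fin N → Fin C → Fin 3 → ℝ) → (Fin N → Fin C → Fin 3 → ℝ) →
        Fin N → Fin N → ℝ :=
      fun GX GY i j => Real.exp (e GX GY i j) / ∑ j', Real.exp (e GX GY i j')
    -- scalar (invariant) output
    let αs : (Fin N → Fin C → Fin 3 → ℝ) → (Fin N → Fin C → Fin 3 → ℝ) →
        Fin N → Fin D → ℝ :=
      fun GX GY i => ∑ j, s GX GY i j • g j
    -- vector output: the aligned features, viewed as a 3×C matrix, with channels mixed by `W`
    let αv : (Fin N → Fin C → Fin 3 → ℝ) → (Fin N → Fin C → Fin 3 → ℝ) →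
        Fin N → Fin C → Fin 3 → ℝ :=
      fun GX GY i c => ∑ j, s GX GY i j
        • (fun r => (Matrix.of (fun r' c' => A GX GY i j c' r') * W) r c)
    -- rotated features
    let FX' : Fin N → Fin C → Fin 3 → ℝ := fun i c => Rx.mulVec (FX i c)
    let FY' : Fin N → Fin C → Fin 3 → ℝ := fun j c => Ry.mulVec (FY j c)
    (∀ i j, e FX' FY' i j = e FX FY i j) ∧
    (∀ i j, s FX' FY' i j = s FX FY i j) ∧
    (∀ i, αs FX' FY' i = αs FX FY i) ∧
    (∀ i c, αv FX' FY' i c = Rx.mulVec (αv FX FY i c)) := by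
  intro A e s αs αv FX' FY'
  have hA : ∀ i j c, A FX' FY' i j c = Rx *ᵥ A FX FY i j c := fun i j c =>
    alignedFeature_mulVec hRx hRy ψ (FX i) (FY j) c
  have he : ∀ i j, e FX' FY' i j = e FX FY i j := by
    intro i j
    simp only [e, hA, FX', dotProduct_mulVec_mulVec_of_transpose_mul_self hRx]
  have hs : ∀ i j, s FX' FY' i j = s FX FY i j := by
    intro i j
    simp only [s, he]
  refine ⟨he, hs, fun i => by simp only [αs, hs], fun i c => ?_⟩
  simp only [αv, hs, hA, of_mulVec_columns, mul_col_eq_mulVec, ← mulVec_mulVec, mulVec_sum,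
    mulVec_smul]

/-- Pair cross-attention: the scores `e`, the softmax weights `s` and the scalar output
`α_s^pair` are invariant to independent rotations `R_x, R_y ∈ SO(3)` of the two point
clouds' vector features, while the vector output `α_v^pair` is equivariant to the rotation
of the first point cloud `X` and invariant to the rotation of the second point cloud `Y`. -/
theorem pair_cross_attention_equivariance
    (N C D : ℕ) (hN : 1 ≤ N) (hC : 1 ≤ C) (hD : 1 ≤ D)
    (p : Fin N → Fin N → ℝ)
    (FX FY : Fin N → Fin C → Fin 3 → ℝ)
    (hFX : ∀ i c, FX i c ≠ 0) (hFY : ∀ j c, FY j c ≠ 0)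
    (g : Fin N → Fin D → ℝ)
    (ψ : (Fin C → ℝ) → (Fin C → ℝ))
    (wq wk : Fin C → ℝ)
    (W : Matrix (Fin C) (Fin C) ℝ)
    (Rx Ry : Matrix (Fin 3) (Fin 3) ℝ)
    (hRx : Rx.transpose * Rx = 1) (hdetx : Rx.det = 1)
    (hRy : Ry.transpose * Ry = 1) (hdety : Ry.det = 1) :
    -- aligned features `A i j c = b(F_X i, F_Y j) c *ᵥ F_Y j c`
    let A : (Fin N → Fin C → Fin 3 → ℝ) → (Fin N → Fin C → Fin 3 → ℝ) →
        Fin N → Fin N → Fin C → Fin 3 → ℝ :=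
      fun GX GY i j c =>
        (ψ (fun c' => frobNorm (Matrix.vecMulVec (GX i c') (GY j c'))) c
            • ((frobNorm (Matrix.vecMulVec (GX i c) (GY j c)))⁻¹
              • Matrix.vecMulVec (GX i c) (GY j c))).mulVec (GY j c)
    -- attention scores
    let e : (Fin N → Fin C → Fin 3 → ℝ) → (Fin N → Fin C → Fin 3 → ℝ) →
        Fin N → Fin N → ℝ :=
      fun GX GY i j =>
        p i j + ∑ c, ∑ c', wq c * (dotProduct (GX i c) (A GX GY i j c')) * wk c'
    -- softmax weights
    let s : (Fin N → Fin C → Fin 3 → ℝ) → (Fin N → Fin C → Fin 3 → ℝ) →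
        Fin N → Fin N → ℝ :=
      fun GX GY i j => Real.exp (e GX GY i j) / ∑ j', Real.exp (e GX GY i j')
    -- scalar (invariant) output
    let αs : (Fin N → Fin C → Fin 3 → ℝ) → (Fin N → Fin C → Fin 3 → ℝ) →
        Fin N → Fin D → ℝ :=
      fun GX GY i => ∑ j, s GX GY i j • g j
    -- vector output: the aligned features, viewed as a 3×C matrix, with channels mixed by `W`
    let αv : (Fin N → Fin C → Fin 3 → ℝ) → (Fin N → Fin C → Fin 3 → ℝ) →
        Fin N → Fin C → Fin 3 → ℝ :=
      fun GX GY i c => ∑ j, s GX GY i j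
        • (fun r => (Matrix.of (fun r' c' => A GX GY i j c' r') * W) r c)
    -- rotated features
    let FX' : Fin N → Fin C → Fin 3 → ℝ := fun i c => Rx.mulVec (FX i c)
    let FY' : Fin N → Fin C → Fin 3 → ℝ := fun j c => Ry.mulVec (FY j c)
    (∀ i j, e FX' FY' i j = e FX FY i j) ∧
    (∀ i j, s FX' FY' i j = s FX FY i j) ∧
    (∀ i, αs FX' FY' i = αs FX FY i) ∧
    (∀ i c, αv FX' FY' i c = Rx.mulVec (αv FX FY i c)) :=
  pair_cross_attention_equivariance_general N C D p FX FY g ψ wq wk W Rx Ry hRx hRy
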